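/- arXiv:1503.04548 — 2 statements merged into one kernel-verified Lean document; each statement's English description precedes it below -/
import Mathlib

section
/- If CRCQ holds at x̄ ∈ Γ and the gradients {∇q_i(x̄) | i∈E} are linearly independent, then the bounded extreme point property holds at x̄. -/
open Metric Set Filter Topology
open scoped RealInnerProductSpace NNReal

noncomputable section

abbrev En (n : ℕ) : Type := EuclideanSpace ℝ (Fin n)

variable (n l₁ l₂ : ℕ) (q : Fin (l₁ + l₂) → En n → ℝ) (xb : En n) (φ : En n → ℝ)

/-- Feasibility for the constraint system `q i x = 0` (i ∈ E), `q i x ≤ 0` (i ∈ I). -/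
def Feas (x : En n) : Prop :=
  ∀ i : Fin (l₁ + l₂), ((i : ℕ) < l₁ → q i x = 0) ∧ (l₁ ≤ (i : ℕ) → q i x ≤ 0)

/-- The feasible (constraint) set Γ. -/
def Gam : Set (En n) := {x | Feas n l₁ l₂ q x}

/-- The normal cone `N_Θ(q(x))` to `Θ = {0}^{l₁} × ℝ^{l₂}_-`, described coordinatewise. -/
def NTheta (x : En n) : Set (En (l₁ + l₂)) :=
  {lam | ∀ i : Fin (l₁ + l₂), l₁ ≤ (i : ℕ) → 0 ≤ lam i ∧ (q i x ≠ 0 → lam i = 0)}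

/-- `∇q(x)*λ = ∑ i λ_i ∇q_i(x)`, as a continuous linear functional. -/
def gradSum (x : En n) (lam : En (l₁ + l₂)) : En n →L[ℝ] ℝ :=
  ∑ i, lam i • fderiv ℝ (q i) x

/-- The set of Lagrange multipliers Λ(x, x*) (with x* represented as a functional ξ). -/
def LamSet (x : En n) (ξ : En n →L[ℝ] ℝ) : Set (En (l₁ + l₂)) :=
  {lam | lam ∈ NTheta n l₁ l₂ q x ∧ gradSum n l₁ l₂ q x lam = ξ}

/-- The Hessian quadratic/bilinear form `⟨v, ∇²q_i(x) w⟩`. -/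
def hessQ (i : Fin (l₁ + l₂)) (x v w : En n) : ℝ :=
  fderiv ℝ (fderiv ℝ (q i)) x v w

/-- `⟨v, ∇²⟨λ,q⟩(x) v⟩`. -/
def quadF (x v : En n) (lam : En (l₁ + l₂)) : ℝ :=
  ∑ i, lam i * hessQ n l₁ l₂ q i x v v

/-- The multiplier set in direction v: maximizers of `λ ↦ ⟨v, ∇²⟨λ,q⟩(x)v⟩` over Λ(x,ξ). -/
def LamDir (x : En n) (ξ : En n →L[ℝ] ℝ) (v : En n) : Set (En (l₁ + l₂)) :=
  {lam | lam ∈ LamSet n l₁ l₂ q x ξ ∧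
    ∀ μ ∈ LamSet n l₁ l₂ q x ξ, quadF n l₁ l₂ q x v μ ≤ quadF n l₁ l₂ q x v lam}

/-- The regular (Fréchet) normal cone to Γ at x, as the polar of the contingent cone. -/
def NhatF (x : En n) : Set (En n →L[ℝ] ℝ) :=
  {ξ | ∀ u ∈ tangentConeAt ℝ (Gam n l₁ l₂ q) x, ξ u ≤ 0}

/-- The limiting (Mordukhovich) normal cone to Γ at x. -/
def Nlim (x : En n) : Set (En n →L[ℝ] ℝ) :=
  {ξ | ∃ xs : ℕ → En n, ∃ ξs : ℕ → (En n →L[ℝ] ℝ),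
    (∀ k, xs k ∈ Gam n l₁ l₂ q ∧ ξs k ∈ NhatF n l₁ l₂ q (xs k)) ∧
    Tendsto xs atTop (𝓝 x) ∧ Tendsto ξs atTop (𝓝 ξ)}

/-- The critical cone `K(x, x*) = T_Γ(x) ∩ {x*}⊥`. -/
def Kcone (x : En n) (ξ : En n →L[ℝ] ℝ) : Set (En n) :=
  tangentConeAt ℝ (Gam n l₁ l₂ q) x ∩ {v | ξ v = 0}

/-- MSCQ: metric subregularity of `x ↦ q(x) − Θ` at `(x̄, 0)`, in residual form. -/
def MSCQ : Prop :=
  ∃ κ > (0 : ℝ), ∃ U ∈ 𝓝 xb, ∀ x ∈ U,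
    Metric.infDist x (Gam n l₁ l₂ q) ≤
      κ * ((∑ i ∈ Finset.univ.filter (fun i : Fin (l₁ + l₂) => (i : ℕ) < l₁), |q i x|) +
        ∑ i ∈ Finset.univ.filter (fun i : Fin (l₁ + l₂) => l₁ ≤ (i : ℕ)), max (q i x) 0)

/-- MFCQ at x̄. -/
def MFCQ : Prop :=
  LinearIndependent ℝ
      (fun i : {i : Fin (l₁ + l₂) // (i : ℕ) < l₁} => fderiv ℝ (q i.1) xb) ∧
  ∃ u : En n, (∀ i : Fin (l₁ + l₂), (i : ℕ) < l₁ → fderiv ℝ (q i) xb u = 0) ∧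
    (∀ i : Fin (l₁ + l₂), l₁ ≤ (i : ℕ) → q i xb = 0 → fderiv ℝ (q i) xb u < 0)

/-- BEPP at x̄: linear independence of equality gradients plus a uniform bound on
extreme points of the multiplier sets near x̄. -/
def BEPP : Prop :=
  LinearIndependent ℝ
      (fun i : {i : Fin (l₁ + l₂) // (i : ℕ) < l₁} => fderiv ℝ (q i.1) xb) ∧
  ∃ U ∈ 𝓝 xb, ∃ κ > (0 : ℝ), ∀ x ∈ U, x ∈ Gam n l₁ l₂ q →
    ∀ ξ : En n →L[ℝ] ℝ, ∀ lam ∈ Set.extremePoints ℝ (LamSet n l₁ l₂ q x ξ),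
      ‖lam‖ ≤ κ * ‖ξ‖

/-- Active constraint indices at x̄ (all equality indices and active inequality indices). -/
def ActiveIdx : Set (Fin (l₁ + l₂)) := {i | (i : ℕ) < l₁ ∨ q i xb = 0}

/-- Rank of the gradient family `{∇q_i(x) | i ∈ A}`. -/
def rankA (x : En n) (A : Finset (Fin (l₁ + l₂))) : ℕ :=
  Module.finrank ℝ
    ↥(Submodule.span ℝ ((fun i => fderiv ℝ (q i) x) '' (↑A : Set (Fin (l₁ + l₂)))))

/-- CRCQ at x̄. -/
def CRCQ : Prop :=
  ∃ U ∈ 𝓝 xb, ∀ A : Finset (Fin (l₁ + l₂)), ↑A ⊆ ActiveIdx n l₁ l₂ q xb →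
    ∀ x ∈ U, rankA n l₁ l₂ q x A = rankA n l₁ l₂ q xb A

/-- The KKT condition at x̄ for minimizing φ over Γ. -/
def KKT : Prop :=
  ∃ lam ∈ NTheta n l₁ l₂ q xb, fderiv ℝ φ xb + gradSum n l₁ l₂ q xb lam = 0

/-- The set Λ̄_E of extreme multipliers in nonzero critical directions. -/
def LamBarE : Set (En (l₁ + l₂)) :=
  ⋃ v ∈ (Kcone n l₁ l₂ q xb (-(fderiv ℝ φ xb)) \ {0}),
    LamDir n l₁ l₂ q xb (-(fderiv ℝ φ xb)) v ∩
      Set.extremePoints ℝ (LamSet n l₁ l₂ q xb (-(fderiv ℝ φ xb)))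

/-- The localized argminimum set M_γ(v*) of the tilted problem. -/
def ArgminSet (γ : ℝ) (v : En n) : Set (En n) :=
  {x | x ∈ Gam n l₁ l₂ q ∧ x ∈ Metric.closedBall xb γ ∧
    ∀ y, y ∈ Gam n l₁ l₂ q → y ∈ Metric.closedBall xb γ →
      φ x - @inner ℝ _ _ v x ≤ φ y - @inner ℝ _ _ v y}

/-- Tilt-stable local minimizer of φ over Γ with modulus κ. -/
def TiltStableMod (κ : ℝ) : Prop :=
  ∃ γ > (0 : ℝ), ∃ δ > (0 : ℝ), ∃ m : En n → En n, m 0 = xb ∧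
    LipschitzOnWith (Real.toNNReal κ) m (Metric.ball (0 : En n) δ) ∧
    ∀ v ∈ Metric.ball (0 : En n) δ, ArgminSet n l₁ l₂ q xb φ γ v = {m v}

/-- Tilt-stable local minimizer (no modulus specified). -/
def TiltStable : Prop :=
  ∃ K : ℝ≥0, ∃ γ > (0 : ℝ), ∃ δ > (0 : ℝ), ∃ m : En n → En n, m 0 = xb ∧
    LipschitzOnWith K m (Metric.ball (0 : En n) δ) ∧
    ∀ v ∈ Metric.ball (0 : En n) δ, ArgminSet n l₁ l₂ q xb φ γ v = {m v}

end

/-! An extreme multiplier `λ ∈ Λ(x, x*)` has linearly independent support gradients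
`{∇q_i(x) | λ_i ≠ 0}`: a kernel direction supported there could be added to `λ` with either sign.
For `x` near `x̄` the support consists of constraints active at `x̄`, so CRCQ carries the linear
independence over to `x̄`. On each of the finitely many such supports `λ ↦ ∇q(x̄)*λ` is bounded
below, this persists for `x` near `x̄` by continuity of `∇q`, and the smallest of these bounds
gives `‖λ‖ ≤ κ‖x*‖`. -/

theorem ContinuousLinearMap.exists_pos_eventually_mul_norm_le_norm_apply
    {𝕜 E F : Type*} [NontriviallyNormedField 𝕜] [CompleteSpace 𝕜]
    [NormedAddCommGroup E] [NormedSpace 𝕜 E] [FiniteDimensional 𝕜 E]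
    [NormedAddCommGroup F] [NormedSpace 𝕜 F] {f : E →L[𝕜] F} {V : Submodule 𝕜 E}
    (hf : ∀ v ∈ V, f v = 0 → v = 0) :
    ∃ c > (0 : ℝ), ∀ᶠ g in 𝓝 f, ∀ v ∈ V, c * ‖v‖ ≤ ‖g v‖ := by
  have hker : LinearMap.ker ((f : E →ₗ[𝕜] F) ∘ₗ V.subtype) = ⊥ :=
    LinearMap.ker_eq_bot'.2 fun v hv => Subtype.ext (hf v v.2 hv)
  obtain ⟨K, -, hK⟩ := LinearMap.exists_antilipschitzWith _ hker
  obtain ⟨c, hc, hfc⟩ := antilipschitzWith_iff_exists_mul_le_norm.1 ⟨K, hK⟩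
  refine ⟨c / 2, half_pos hc, Metric.eventually_nhds_iff.2 ⟨c / 2, half_pos hc, ?_⟩⟩
  intro g hg v hv
  rw [dist_eq_norm] at hg
  have hfv : c * ‖v‖ ≤ ‖f v‖ := hfc ⟨v, hv⟩
  have hgv : ‖(g - f) v‖ ≤ c / 2 * ‖v‖ :=
    ((g - f).le_opNorm v).trans (mul_le_mul_of_nonneg_right hg.le (norm_nonneg v))
  calc c / 2 * ‖v‖ = c * ‖v‖ - c / 2 * ‖v‖ := by ring
    _ ≤ ‖f v‖ - ‖(g - f) v‖ := by gcongr
    _ ≤ ‖g v‖ := by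
      rw [sub_apply]
      linarith [norm_sub_norm_le (f v) (g v), norm_sub_rev (g v) (f v)]

theorem eq_zero_of_mem_extremePoints_of_eventually_add_smul_mem {E : Type*} [AddCommGroup E]
    [Module ℝ E] {s : Set E} {x v : E} (hx : x ∈ s.extremePoints ℝ)
    (hv : ∀ᶠ t in 𝓝 (0 : ℝ), x + t • v ∈ s) : v = 0 := by
  have hneg : ∀ᶠ t in 𝓝 (0 : ℝ), x + (-t) • v ∈ s :=
    (continuous_neg.tendsto' 0 0 neg_zero).eventually hv
  obtain ⟨t, ⟨hpos, hneg⟩, ht⟩ :=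
    ((hv.and hneg).filter_mono nhdsWithin_le_nhds |>.and self_mem_nhdsWithin).exists
      (f := 𝓝[≠] (0 : ℝ))
  have hseg : x ∈ openSegment ℝ (x + (-t) • v) (x + t • v) :=
    ⟨1 / 2, 1 / 2, by norm_num, by norm_num, by norm_num, by module⟩
  have := hx.2 hneg hpos hseg
  rw [add_eq_left, smul_eq_zero] at this
  exact this.resolve_left (neg_ne_zero.2 ht)

def vanishingOutside {ι : Type*} (s : Set ι) : Submodule ℝ (EuclideanSpace ℝ ι) where
  carrier := {μ | ∀ i ∉ s, μ i = 0}
  add_mem' hμ hν i hi := by simp [hμ i hi, hν i hi]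
  zero_mem' _ _ := rfl
  smul_mem' c μ hμ i hi := by simp [hμ i hi]

section Multipliers

variable {n l₁ l₂ : ℕ} {q : Fin (l₁ + l₂) → En n → ℝ} {x : En n}

noncomputable def gradSumL (q : Fin (l₁ + l₂) → En n → ℝ) (x : En n) :
    En (l₁ + l₂) →L[ℝ] En n →L[ℝ] ℝ :=
  ∑ i, (EuclideanSpace.proj i).smulRight (fderiv ℝ (q i) x)

theorem gradSumL_apply (lam : En (l₁ + l₂)) : gradSumL q x lam = gradSum n l₁ l₂ q x lam := by
  simp [gradSumL, gradSum]

theorem continuous_gradSumL (hq : ∀ i, ContDiff ℝ 1 (q i)) : Continuous (gradSumL q) := by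
  refine continuous_clm_apply.2 fun lam => ?_
  simp only [gradSumL_apply, gradSum]
  have := fun i => (hq i).continuous_fderiv one_ne_zero
  fun_prop

theorem gradSum_toLp_eq_linearCombination (l : Fin (l₁ + l₂) →₀ ℝ) :
    gradSum n l₁ l₂ q x (WithLp.toLp 2 l) =
      Finsupp.linearCombination ℝ (fun i => fderiv ℝ (q i) x) l := by
  simp [gradSum, Finsupp.linearCombination_apply, Finsupp.sum_fintype]

theorem linearIndepOn_fderiv_iff {s : Set (Fin (l₁ + l₂))} :
    LinearIndepOn ℝ (fun i => fderiv ℝ (q i) x) s ↔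
      ∀ μ ∈ vanishingOutside s, gradSumL q x μ = 0 → μ = 0 := by
  rw [linearIndepOn_iff]
  constructor
  · intro h μ hμ hμ0
    have := h (Finsupp.equivFunOnFinite.symm μ) ((Finsupp.mem_supported' _ _).2 hμ)
      (by rw [← gradSum_toLp_eq_linearCombination, ← gradSumL_apply]; exact hμ0)
    ext i
    simpa using DFunLike.congr_fun this i
  · intro h l hl hl0
    have := h (WithLp.toLp 2 l) ((Finsupp.mem_supported' _ _).1 hl)
      (by rw [gradSumL_apply, gradSum_toLp_eq_linearCombination, hl0])
    ext i
    simpa using congrArg (· i) this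

theorem eventually_add_smul_mem_LamSet {ξ : En n →L[ℝ] ℝ} {lam μ : En (l₁ + l₂)}
    (hlam : lam ∈ LamSet n l₁ l₂ q x ξ) (hμ : ∀ i, lam i = 0 → μ i = 0)
    (hμ0 : gradSumL q x μ = 0) :
    ∀ᶠ t in 𝓝 (0 : ℝ), lam + t • μ ∈ LamSet n l₁ l₂ q x ξ := by
  have hnonneg : ∀ i : Fin (l₁ + l₂), l₁ ≤ (i : ℕ) →
      ∀ᶠ t in 𝓝 (0 : ℝ), 0 ≤ lam i + t * μ i := by
    intro i hi
    rcases (hlam.1 i hi).1.eq_or_lt with h | h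
    · exact .of_forall fun t => by simp [← h, hμ i h.symm]
    · have : Tendsto (fun t : ℝ => lam i + t * μ i) (𝓝 0) (𝓝 (lam i)) :=
        (by fun_prop : Continuous fun t : ℝ => lam i + t * μ i).tendsto' 0 _ (by simp)
      exact (this.eventually (lt_mem_nhds h)).mono fun _ => le_of_lt
  filter_upwards [eventually_all.2 fun i => eventually_imp_distrib_left.2 (hnonneg i)]
    with t ht
  refine ⟨fun i hi => ⟨by simpa using ht i hi, fun hqi => ?_⟩, ?_⟩
  · have h0 := (hlam.1 i hi).2 hqi
    simp [h0, hμ i h0]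
  · rw [← gradSumL_apply, map_add, map_smul, hμ0, smul_zero, add_zero, gradSumL_apply, hlam.2]

theorem linearIndepOn_fderiv_of_mem_extremePoints {ξ : En n →L[ℝ] ℝ} {lam : En (l₁ + l₂)}
    (hlam : lam ∈ (LamSet n l₁ l₂ q x ξ).extremePoints ℝ) :
    LinearIndepOn ℝ (fun i => fderiv ℝ (q i) x) {i | lam i ≠ 0} :=
  linearIndepOn_fderiv_iff.2 fun _ hμ hμ0 =>
    eq_zero_of_mem_extremePoints_of_eventually_add_smul_mem hlam <|
      eventually_add_smul_mem_LamSet hlam.1 (fun i hi => hμ i (not_not.2 hi)) hμ0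

theorem linearIndepOn_fderiv_iff_card_eq_rankA {A : Finset (Fin (l₁ + l₂))} :
    LinearIndepOn ℝ (fun i => fderiv ℝ (q i) x) ↑A ↔ A.card = rankA n l₁ l₂ q x A := by
  rw [LinearIndepOn, linearIndependent_iff_card_eq_finrank_span, rankA, Set.image_eq_range]
  simp only [Finset.coe_sort_coe, Fintype.card_coe]
  rfl

theorem exists_pos_eventually_mul_norm_le_norm_gradSum {xb : En n}
    (hq : ∀ i, ContDiff ℝ 1 (q i)) :
    ∃ c > (0 : ℝ), ∀ᶠ x in 𝓝 xb, ∀ A : Finset (Fin (l₁ + l₂)),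
      LinearIndepOn ℝ (fun i => fderiv ℝ (q i) xb) ↑A →
        ∀ μ ∈ vanishingOutside (↑A : Set (Fin (l₁ + l₂))),
          c * ‖μ‖ ≤ ‖gradSum n l₁ l₂ q x μ‖ := by
  -- a bound valid for one support remains valid for any smaller constant, so the finitely many
  -- supports can share one
  have hA : ∀ A : Finset (Fin (l₁ + l₂)), ∀ᶠ c in 𝓝[>] (0 : ℝ), ∀ᶠ x in 𝓝 xb,
      LinearIndepOn ℝ (fun i => fderiv ℝ (q i) xb) ↑A →
        ∀ μ ∈ vanishingOutside (↑A : Set (Fin (l₁ + l₂))),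
          c * ‖μ‖ ≤ ‖gradSum n l₁ l₂ q x μ‖ := by
    intro A
    by_cases hLI : LinearIndepOn ℝ (fun i => fderiv ℝ (q i) xb) ↑A
    · obtain ⟨c₀, hc₀, hg⟩ :=
        ContinuousLinearMap.exists_pos_eventually_mul_norm_le_norm_apply
          (linearIndepOn_fderiv_iff.1 hLI)
      have hx := (continuous_gradSumL hq).continuousAt.eventually hg
      filter_upwards [Ioc_mem_nhdsGT hc₀] with c hc
      filter_upwards [hx] with x hx _ μ hμ
      rw [← gradSumL_apply]
      exact (mul_le_mul_of_nonneg_right hc.2 (norm_nonneg μ)).trans (hx μ hμ)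
    · exact .of_forall fun _ => .of_forall fun _ h => absurd h hLI
  obtain ⟨c, hc, hpos⟩ := ((eventually_all.2 hA).and self_mem_nhdsWithin).exists
  exact ⟨c, hpos, eventually_all.2 hc⟩

end Multipliers

theorem stmt5_general (n l₁ l₂ : ℕ) (q : Fin (l₁ + l₂) → En n → ℝ) (xb : En n)
    (hq : ∀ i, ContDiff ℝ 1 (q i))
    (hcrcq : CRCQ n l₁ l₂ q xb)
    (hLI : LinearIndependent ℝ
      (fun i : {i : Fin (l₁ + l₂) // (i : ℕ) < l₁} => fderiv ℝ (q i.1) xb)) :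
    BEPP n l₁ l₂ q xb := by
  obtain ⟨U, hU, hrank⟩ := hcrcq
  obtain ⟨c, hc, hcoer⟩ := exists_pos_eventually_mul_norm_le_norm_gradSum (xb := xb) hq
  have hinactive : ∀ᶠ x in 𝓝 xb, ∀ i, q i xb ≠ 0 → q i x ≠ 0 :=
    eventually_all.2 fun i => eventually_imp_distrib_left.2 fun h =>
      (hq i).continuous.continuousAt.eventually_ne h
  refine ⟨hLI, _, hcoer.and (hinactive.and hU), c⁻¹, inv_pos.2 hc, ?_⟩
  rintro x ⟨hxc, hxi, hxU⟩ - ξ lam hlam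
  set A := Finset.univ.filter fun i => lam i ≠ 0
  have hA : (↑A : Set (Fin (l₁ + l₂))) = {i | lam i ≠ 0} := by simp [A]
  have hA_active : ↑A ⊆ ActiveIdx n l₁ l₂ q xb := by
    intro i hi
    rw [hA] at hi
    by_cases hi₁ : (i : ℕ) < l₁
    · exact Or.inl hi₁
    · exact Or.inr (not_not.1 fun h => hi ((hlam.1.1 i (not_lt.1 hi₁)).2 (hxi i h)))
  have hLIx := linearIndepOn_fderiv_of_mem_extremePoints hlam
  rw [← hA, linearIndepOn_fderiv_iff_card_eq_rankA, hrank A hA_active x hxU,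
    ← linearIndepOn_fderiv_iff_card_eq_rankA] at hLIx
  refine (le_inv_mul_iff₀ hc).2 ?_
  simpa only [hlam.1.2] using hxc A hLIx lam fun i hi => by simpa [hA] using hi

/-- CRCQ together with linear independence of the equality gradients
implies the bounded extreme point property. -/
theorem stmt5 (n l₁ l₂ : ℕ) (q : Fin (l₁ + l₂) → En n → ℝ) (xb : En n)
    (hq : ∀ i, ContDiff ℝ 1 (q i)) (hfeas : Feas n l₁ l₂ q xb)
    (hcrcq : CRCQ n l₁ l₂ q xb)
    (hLI : LinearIndependent ℝ
      (fun i : {i : Fin (l₁ + l₂) // (i : ℕ) < l₁} => fderiv ℝ (q i.1) xb)) :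
    BEPP n l₁ l₂ q xb :=
  stmt5_general n l₁ l₂ q xb hq hcrcq hLI
end

section
/- Let MSCQ hold at x̄ ∈ Γ and (x,x*) ∈ graph N̂_Γ with x near x̄. Then for every critical direction v ∈ K(x,x*) the directional multiplier set Λ(x,x*;v) = argmax{⟨v, ∇²⟨λ,q⟩(x)v⟩ : λ ∈ Λ(x,x*)} is nonempty; i.e., the linear program maximizing λ ↦ ⟨v,∇²⟨λ,q⟩(x)v⟩ over the polyhedron Λ(x,x*) has an optimal solution. -/
open Metric Set Filter Topology
open scoped RealInnerProductSpace NNReal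

/-!
Under MSCQ, for feasible `x` near `x̄` the linearized cone is contained in the contingent cone
`T_Γ(x)`: along `x + t u` the constraint residual is `o(t)`, hence so is the distance to `Γ`.
A regular normal `x*` is therefore nonpositive on the linearized cone, and Farkas' lemma produces a
multiplier, so `Λ(x, x*)` is a nonempty polyhedron. Its recession directions are the
`λ ∈ N_Θ(q(x))` with `∇q(x)*λ = 0`; for such `λ` the function `⟨λ, q⟩` attains its maximum over `Γ`
at `x` with zero gradient, so the second-order necessary condition gives
`⟨v, ∇²⟨λ,q⟩(x)v⟩ ≤ 0` for every tangent `v`. A linear function that is nonpositive on the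
recession cone of a nonempty polyhedron attains its maximum on it.
-/

open Finset Asymptotics

section Farkas

variable {𝕜 E ι : Type*} [Field 𝕜] [LinearOrder 𝕜] [IsStrictOrderedRing 𝕜]
  [AddCommGroup E] [Module 𝕜 E]

theorem eq_smul_of_comp_sub_smulRight_eq_zero {g ρ : Module.Dual 𝕜 E} {w : E}
    (h : ρ ∘ₗ (LinearMap.id - (g w)⁻¹ • g.smulRight w) = 0) : ρ = (ρ w / g w) • g := by
  ext u
  have hu := LinearMap.congr_fun h u
  simp only [LinearMap.comp_apply, LinearMap.sub_apply, LinearMap.id_apply, LinearMap.smul_apply,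
    LinearMap.smulRight_apply, map_sub, map_smul, smul_eq_mul, LinearMap.zero_apply] at hu
  rw [sub_eq_zero] at hu
  simp only [LinearMap.smul_apply, smul_eq_mul, hu]
  ring

theorem exists_nonneg_sum_smul_eq_of_forall_nonpos_finset (s : Finset ι)
    (f : ι → Module.Dual 𝕜 E) (ξ : Module.Dual 𝕜 E) (hξ : ∀ u, (∀ i ∈ s, f i u ≤ 0) → ξ u ≤ 0) :
    ∃ μ : ι → 𝕜, (∀ i, 0 ≤ μ i) ∧ ξ = ∑ i ∈ s, μ i • f i := by
  classical
  induction s using Finset.induction_on generalizing f ξ with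
  | empty =>
    refine ⟨0, fun _ => le_rfl, ?_⟩
    ext u
    have h₁ := hξ u (by simp)
    have h₂ := hξ (-u) (by simp)
    simp only [map_neg, Left.neg_nonpos_iff] at h₂
    simp [le_antisymm h₁ h₂]
  | insert a s ha IH =>
    have hupdate (μ : ι → 𝕜) (α : 𝕜) : ∑ i ∈ insert a s, Function.update μ a α i • f i =
        α • f a + ∑ i ∈ s, μ i • f i := by
      rw [sum_insert ha, Function.update_self]
      congr 1
      exact sum_congr rfl fun i hi => by rw [Function.update_of_ne (ne_of_mem_of_not_mem hi ha)]
    have hnonneg {μ : ι → 𝕜} {α : 𝕜} (hμ : ∀ i, 0 ≤ μ i) (hα : 0 ≤ α) (i : ι) :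
        0 ≤ Function.update μ a α i := by
      rcases eq_or_ne i a with rfl | hi <;> simp [*]
    by_cases hs : ∀ u, (∀ i ∈ s, f i u ≤ 0) → ξ u ≤ 0
    · obtain ⟨μ, hμ, rfl⟩ := IH f ξ hs
      exact ⟨Function.update μ a 0, hnonneg hμ le_rfl, by simp [hupdate]⟩
    push Not at hs
    obtain ⟨w, hw, hξw⟩ := hs
    have hgw : 0 < f a w := by
      by_contra! h
      exact hξw.not_ge (hξ w (forall_mem_insert _ _ _ |>.2 ⟨h, hw⟩))
    -- `P` projects along `w` onto the kernel of `f a`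
    set P : E →ₗ[𝕜] E := LinearMap.id - (f a w)⁻¹ • (f a).smulRight w
    have hfaP (u : E) : f a (P u) = 0 := by
      simp [P, mul_left_comm _ (f a u), hgw.ne']
    obtain ⟨μ, hμ, hξP⟩ := IH (fun i => f i ∘ₗ P) (ξ ∘ₗ P) fun u hu =>
      hξ (P u) (forall_mem_insert _ _ _ |>.2 ⟨(hfaP u).le, hu⟩)
    set ρ := ξ - ∑ i ∈ s, μ i • f i
    have hρ : ρ = (ρ w / f a w) • f a := eq_smul_of_comp_sub_smulRight_eq_zero <|
      LinearMap.ext fun u => by simpa [ρ, P, sub_eq_zero] using LinearMap.congr_fun hξP u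
    have hρw : 0 ≤ ρ w / f a w := by
      refine div_nonneg ?_ hgw.le
      have hρ_apply : ρ w = ξ w - ∑ i ∈ s, μ i * f i w := by simp [ρ]
      have : ∑ i ∈ s, μ i * f i w ≤ 0 :=
        sum_nonpos fun i hi => mul_nonpos_of_nonneg_of_nonpos (hμ i) (hw i hi)
      linarith
    exact ⟨Function.update μ a (ρ w / f a w), hnonneg hμ hρw, by rw [hupdate, ← hρ, sub_add_cancel]⟩

theorem exists_nonneg_sum_smul_eq_of_forall_nonpos [Fintype ι] (f : ι → Module.Dual 𝕜 E)
    (ξ : Module.Dual 𝕜 E) (hξ : ∀ u, (∀ i, f i u ≤ 0) → ξ u ≤ 0) :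
    ∃ μ : ι → 𝕜, (∀ i, 0 ≤ μ i) ∧ ξ = ∑ i, μ i • f i :=
  exists_nonneg_sum_smul_eq_of_forall_nonpos_finset univ f ξ fun u hu =>
    hξ u fun i => hu i (mem_univ i)

theorem exists_forall_le_of_forall_nonneg [Fintype ι] (f : ι → Module.Dual 𝕜 E) (b : ι → 𝕜)
    (h : ∀ ν : ι → 𝕜, (∀ i, 0 ≤ ν i) → ∑ i, ν i • f i = 0 → 0 ≤ ∑ i, ν i * b i) :
    ∃ x, ∀ i, f i x ≤ b i := by
  by_contra! hinf
  -- homogenize: `(x, t)` with `t > 0` and `f i x ≤ t * b i` would give the solution `t⁻¹ • x`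
  obtain ⟨ν, hν, hsnd⟩ := exists_nonneg_sum_smul_eq_of_forall_nonpos
    (fun i => f i ∘ₗ LinearMap.fst 𝕜 E 𝕜 - b i • LinearMap.snd 𝕜 E 𝕜) (LinearMap.snd 𝕜 E 𝕜)
    fun ⟨x, t⟩ hx => by
      by_contra! ht
      obtain ⟨i, hi⟩ := hinf (t⁻¹ • x)
      have := hx i
      simp only [LinearMap.sub_apply, LinearMap.comp_apply, LinearMap.fst_apply,
        LinearMap.smul_apply, LinearMap.snd_apply, smul_eq_mul, sub_nonpos] at this
      rw [LinearMap.snd_apply] at ht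
      rw [map_smul, smul_eq_mul, lt_inv_mul_iff₀ ht] at hi
      linarith
  have hf : ∑ i, ν i • f i = 0 := by
    ext x
    simpa using (LinearMap.congr_fun hsnd (x, 0)).symm
  have hb : -∑ i, ν i * b i = 1 := by
    simpa using (LinearMap.congr_fun hsnd (0, 1)).symm
  linarith [h ν hν hf]

end Farkas

section LinearProgramming

variable {E F ι : Type*} [AddCommGroup E] [Module ℝ E] [AddCommGroup F] [Module ℝ F] [Fintype ι]

theorem exists_isMaxOn_of_forall_nonpos (f : ι → Module.Dual ℝ E) (b : ι → ℝ)
    (c : Module.Dual ℝ E) (hne : {x | ∀ i, f i x ≤ b i}.Nonempty)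
    (hrec : ∀ u, (∀ i, f i u ≤ 0) → c u ≤ 0) :
    ∃ x ∈ {x | ∀ i, f i x ≤ b i}, IsMaxOn c {x | ∀ i, f i x ≤ b i} x := by
  set P := {x | ∀ i, f i x ≤ b i}
  obtain ⟨x₀, hx₀⟩ := hne
  have hdom : ∀ ν : ι → ℝ, (∀ i, 0 ≤ ν i) → ∀ t : ℝ, t • c = ∑ i, ν i • f i →
      ∀ y ∈ P, t * c y ≤ ∑ i, ν i * b i := by
    intro ν hν t h y hy
    have hy' : t * c y = ∑ i, ν i * f i y := by simpa using LinearMap.congr_fun h y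
    rw [hy']
    exact sum_le_sum fun i _ => mul_le_mul_of_nonneg_left (hy i) (hν i)
  obtain ⟨μ, hμ, hc⟩ := exists_nonneg_sum_smul_eq_of_forall_nonpos f c hrec
  have hbdd : BddAbove (c '' P) := ⟨∑ i, μ i * b i, by
    rintro _ ⟨y, hy, rfl⟩
    simpa using hdom μ hμ 1 (by simpa using hc) y hy⟩
  set S := sSup (c '' P)
  -- the optimal value is attained: add the constraint `S ≤ c x` and check solvability
  obtain ⟨x, hx⟩ := exists_forall_le_of_forall_nonneg (fun o : Option ι => o.elim (-c) f)
    (fun o : Option ι => o.elim (-S) b) fun ν hν h0 => by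
      simp only [Fintype.sum_option, Option.elim, smul_neg, neg_add_eq_zero] at h0 ⊢
      have hν₀ := hdom (fun i => ν (some i)) (fun i => hν _) (ν none) h0
      rcases (hν none).eq_or_lt with h | h
      · simpa [← h] using hν₀ x₀ hx₀
      · have : S ≤ (∑ i, ν (some i) * b i) / ν none :=
          csSup_le ⟨c x₀, x₀, hx₀, rfl⟩ fun _ ⟨y, hy, hcy⟩ => by
            rw [← hcy, le_div_iff₀ h, mul_comm]
            exact hν₀ y hy
        rw [le_div_iff₀ h] at this
        linarith
  refine ⟨x, fun i => hx (some i), fun y hy => ?_⟩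
  have hxS : -c x ≤ -S := hx none
  have hyS : c y ≤ S := le_csSup hbdd ⟨y, hy, rfl⟩
  show c y ≤ c x
  linarith

theorem exists_isMaxOn_of_forall_nonpos_of_eq (A : E →ₗ[ℝ] F) (y : F)
    (f : ι → Module.Dual ℝ E) (b : ι → ℝ) (c : Module.Dual ℝ E)
    (hne : {x | A x = y ∧ ∀ i, f i x ≤ b i}.Nonempty)
    (hrec : ∀ u, A u = 0 → (∀ i, f i u ≤ 0) → c u ≤ 0) :
    ∃ x ∈ {x | A x = y ∧ ∀ i, f i x ≤ b i}, IsMaxOn c {x | A x = y ∧ ∀ i, f i x ≤ b i} x := by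
  obtain ⟨x₀, hAx₀, hx₀⟩ := hne
  set K := LinearMap.ker A
  obtain ⟨k, hk, hmax⟩ := exists_isMaxOn_of_forall_nonpos (fun i => f i ∘ₗ K.subtype)
    (fun i => b i - f i x₀) (c ∘ₗ K.subtype) ⟨0, by simpa using hx₀⟩
    fun u hu => hrec u u.2 hu
  refine ⟨x₀ + k, ⟨by simp [hAx₀, LinearMap.mem_ker.1 k.2], fun i => ?_⟩, fun z ⟨hAz, hz⟩ => ?_⟩
  · have := hk i
    simp only [LinearMap.comp_apply, Submodule.subtype_apply] at this
    rw [map_add]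
    linarith
  · have hzK : z - x₀ ∈ K := LinearMap.mem_ker.2 (by simp [hAz, hAx₀])
    have : c (z - x₀) ≤ c k := @hmax ⟨z - x₀, hzK⟩ fun i => by
      simp only [LinearMap.comp_apply, Submodule.subtype_apply, map_sub]
      linarith [hz i]
    rw [map_sub] at this
    show c z ≤ c (x₀ + k)
    rw [map_add]
    linarith

end LinearProgramming

section SecondOrder

variable {E : Type*} [NormedAddCommGroup E] [NormedSpace ℝ E] {g : E → ℝ}

theorem exists_mem_Ioo_fderiv_fderiv_apply_nonpos (hg : ContDiff ℝ 2 g) {x d : E}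
    (hd : fderiv ℝ g x d = 0) (hle : g (x + d) ≤ g x) :
    ∃ θ ∈ Ioo (0 : ℝ) 1, fderiv ℝ (fderiv ℝ g) (x + θ • d) d d ≤ 0 := by
  have hg' : ContDiff ℝ 1 (fderiv ℝ g) := hg.fderiv_right le_rfl
  have hline (t : ℝ) : HasDerivAt (fun s : ℝ => x + s • d) d t := by
    simpa using ((hasDerivAt_id t).smul_const d).const_add x
  have hφ (t : ℝ) : HasDerivAt (fun s => g (x + s • d)) (fderiv ℝ g (x + t • d) d) t :=
    ((hg.differentiable two_ne_zero) _).hasFDerivAt.comp_hasDerivAt t (hline t)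
  have hφ' (t : ℝ) : HasDerivAt (fun s => fderiv ℝ g (x + s • d) d)
      (fderiv ℝ (fderiv ℝ g) (x + t • d) d d) t :=
    (((hg'.differentiable one_ne_zero) _).hasFDerivAt.comp_hasDerivAt t (hline t)).clm_apply
      (hasDerivAt_const t d) |>.congr_deriv (by simp)
  obtain ⟨θ₁, hθ₁, hslope₁⟩ := exists_hasDerivAt_eq_slope _ _ zero_lt_one
    (fun t _ => (hφ t).continuousAt.continuousWithinAt) fun t _ => hφ t
  obtain ⟨θ₂, hθ₂, hslope₂⟩ := exists_hasDerivAt_eq_slope _ _ hθ₁.1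
    (fun t _ => (hφ' t).continuousAt.continuousWithinAt) fun t _ => hφ' t
  refine ⟨θ₂, ⟨hθ₂.1, hθ₂.2.trans hθ₁.2⟩, ?_⟩
  rw [hslope₂, sub_zero, zero_smul, add_zero, hd, sub_zero, hslope₁]
  simp only [one_smul, zero_smul, add_zero, sub_zero, div_one]
  exact div_nonpos_of_nonpos_of_nonneg (by linarith) hθ₁.1.le

theorem fderiv_fderiv_apply_nonpos_of_isMaxOn (hg : ContDiff ℝ 2 g) {S : Set E} {x v : E}
    (hv : v ∈ tangentConeAt ℝ S x) (hg₀ : fderiv ℝ g x = 0) (hmax : IsMaxOn g S x) :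
    fderiv ℝ (fderiv ℝ g) x v v ≤ 0 := by
  obtain ⟨α, l, hl, c, d, hd₀, hdS, hcd⟩ := exists_fun_of_mem_tangentConeAt hv
  have hθ (n : α) : ∃ θ ∈ Icc (0 : ℝ) 1,
      x + d n ∈ S → fderiv ℝ (fderiv ℝ g) (x + θ • d n) (d n) (d n) ≤ 0 := by
    by_cases hn : x + d n ∈ S
    · obtain ⟨θ, hθ, hneg⟩ := exists_mem_Ioo_fderiv_fderiv_apply_nonpos hg (by simp [hg₀]) (hmax hn)
      exact ⟨θ, Ioo_subset_Icc_self hθ, fun _ => hneg⟩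
    · exact ⟨0, left_mem_Icc.2 zero_le_one, fun h => absurd h hn⟩
  choose θ hθI hθ using hθ
  have hH : Continuous fun p : E × E => fderiv ℝ (fderiv ℝ g) p.1 p.2 p.2 :=
    ((((hg.fderiv_right le_rfl).continuous_fderiv one_ne_zero).comp continuous_fst).clm_apply
      continuous_snd).clm_apply continuous_snd
  have hθd : Tendsto (fun n => θ n • d n) l (𝓝 0) := by
    refine squeeze_zero_norm (fun n => ?_) (tendsto_zero_iff_norm_tendsto_zero.1 hd₀)
    rw [norm_smul, Real.norm_of_nonneg (hθI n).1]
    exact mul_le_of_le_one_left (norm_nonneg _) (hθI n).2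
  have hlim : Tendsto (fun n => (x + θ n • d n, c n • d n)) l (𝓝 (x, v)) := by
    simpa using (tendsto_const_nhds.add hθd).prodMk_nhds hcd
  refine le_of_tendsto ((hH.tendsto _).comp hlim) ?_
  filter_upwards [hdS] with n hn
  simp only [Function.comp_apply, map_smul, smul_apply, smul_eq_mul, ← mul_assoc]
  exact mul_nonpos_of_nonneg_of_nonpos (mul_self_nonneg _) (hθ n hn)

end SecondOrder

section Tangency

variable {E : Type*} [NormedAddCommGroup E] [NormedSpace ℝ E]

theorem mem_tangentConeAt_of_isLittleO_infDist {S : Set E} {x u : E} (hS : S.Nonempty)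
    (h : (fun t : ℝ => infDist (x + t • u) S) =o[𝓝[>] 0] fun t => t) :
    u ∈ tangentConeAt ℝ S x := by
  have hy (t : ℝ) : ∃ y ∈ S, 0 < t → dist (x + t • u) y < infDist (x + t • u) S + t ^ 2 := by
    by_cases ht : 0 < t
    · obtain ⟨y, hyS, hy⟩ := (infDist_lt_iff hS).1 (lt_add_of_pos_right _ (pow_pos ht 2))
      exact ⟨y, hyS, fun _ => hy⟩
    · exact ⟨hS.some, hS.some_mem, fun h => absurd h ht⟩
  choose y hyS hy using hy
  have hcd : Tendsto (fun t => t⁻¹ • (y t - x)) (𝓝[>] 0) (𝓝 u) := by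
    rw [tendsto_iff_norm_sub_tendsto_zero]
    have hbound : Tendsto (fun t : ℝ => infDist (x + t • u) S / t + t) (𝓝[>] 0) (𝓝 0) := by
      simpa using h.tendsto_div_nhds_zero.add (tendsto_nhdsWithin_of_tendsto_nhds tendsto_id)
    refine squeeze_zero' (Eventually.of_forall fun _ => norm_nonneg _) ?_ hbound
    filter_upwards [self_mem_nhdsWithin] with t (ht : 0 < t)
    have : t⁻¹ • (y t - x) - u = t⁻¹ • (y t - (x + t • u)) := by
      rw [smul_sub, smul_sub, smul_add, inv_smul_smul₀ ht.ne']
      abel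
    rw [this, norm_smul, norm_inv, Real.norm_of_nonneg ht.le, ← dist_eq_norm, dist_comm,
      inv_mul_le_iff₀ ht, mul_add, mul_div_cancel₀ _ ht.ne', ← sq]
    exact (hy t ht).le
  refine mem_tangentConeAt_of_seq (𝓝[>] 0) (fun t => t⁻¹) (fun t => y t - x) ?_
    (Eventually.of_forall fun t => by simpa using hyS t) hcd
  have hd : Tendsto (fun t : ℝ => t • t⁻¹ • (y t - x)) (𝓝[>] 0) (𝓝 ((0 : ℝ) • u)) :=
    (tendsto_nhdsWithin_of_tendsto_nhds tendsto_id).smul hcd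
  rw [zero_smul] at hd
  refine hd.congr' ?_
  filter_upwards [self_mem_nhdsWithin] with t (ht : 0 < t)
  exact smul_inv_smul₀ ht.ne' _

theorem isLittleO_max_zero_of_hasDerivAt {φ : ℝ → ℝ} {φ' : ℝ} (hφ : HasDerivAt φ φ' 0)
    (h₀ : φ 0 ≤ 0) (h' : φ 0 = 0 → φ' ≤ 0) :
    (fun t => max (φ t) 0) =o[𝓝[>] 0] fun t => t := by
  rcases h₀.lt_or_eq with hneg | hzero
  · refine (isLittleO_zero _ _).congr' ?_ EventuallyEq.rfl
    filter_upwards [nhdsWithin_le_nhds (hφ.continuousAt.eventually (gt_mem_nhds hneg))]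
      with t ht
    exact (max_eq_right ht.le).symm
  · have hlin : (fun t => φ t - t * φ') =o[𝓝[>] 0] fun t => t := by
      simpa [hzero] using (hasDerivAt_iff_isLittleO.1 hφ).mono nhdsWithin_le_nhds
    refine IsBigO.trans_isLittleO (IsBigO.of_bound 1 ?_) hlin
    filter_upwards [self_mem_nhdsWithin] with t (ht : 0 < t)
    have : t * φ' ≤ 0 := mul_nonpos_of_nonneg_of_nonpos ht.le (h' hzero)
    rw [Real.norm_of_nonneg (le_max_right _ _), one_mul, Real.norm_eq_abs]
    exact max_le (by linarith [le_abs_self (φ t - t * φ')]) (abs_nonneg _)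

end Tangency

section ConstraintSystem

variable {n l₁ l₂ : ℕ} {q : Fin (l₁ + l₂) → En n → ℝ} {x : En n}

/-- `{u | ∇q(x) u ∈ T_Θ(q(x))}`. -/
def linearizedCone (n l₁ l₂ : ℕ) (q : Fin (l₁ + l₂) → En n → ℝ) (x : En n) : Set (En n) :=
  {u | ∀ i : Fin (l₁ + l₂), ((i : ℕ) < l₁ → fderiv ℝ (q i) x u = 0) ∧
    (l₁ ≤ (i : ℕ) → q i x = 0 → fderiv ℝ (q i) x u ≤ 0)}

noncomputable def gradSumₗ (n l₁ l₂ : ℕ) (q : Fin (l₁ + l₂) → En n → ℝ) (x : En n) :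
    En (l₁ + l₂) →ₗ[ℝ] En n →L[ℝ] ℝ where
  toFun := gradSum n l₁ l₂ q x
  map_add' _ _ := by simp [gradSum, add_smul, sum_add_distrib]
  map_smul' _ _ := by simp [gradSum, smul_sum, smul_smul]

noncomputable def quadFₗ (n l₁ l₂ : ℕ) (q : Fin (l₁ + l₂) → En n → ℝ) (x v : En n) :
    Module.Dual ℝ (En (l₁ + l₂)) where
  toFun := quadF n l₁ l₂ q x v
  map_add' _ _ := by simp [quadF, add_mul, sum_add_distrib]
  map_smul' _ _ := by simp [quadF, mul_sum, mul_assoc]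

theorem gradSum_single (i : Fin (l₁ + l₂)) (a : ℝ) :
    gradSum n l₁ l₂ q x (EuclideanSpace.single i a) = a • fderiv ℝ (q i) x := by
  simp [gradSum, ite_smul]

theorem exists_nTheta_eq_setOf_forall_nonpos (x : En n) :
    ∃ (ι : Type) (_ : Fintype ι) (f : ι → Module.Dual ℝ (En (l₁ + l₂))),
      NTheta n l₁ l₂ q x = {lam | ∀ j, f j lam ≤ 0} := by
  classical
  refine ⟨{i : Fin (l₁ + l₂) // l₁ ≤ (i : ℕ)} ⊕ {i : Fin (l₁ + l₂) // l₁ ≤ (i : ℕ) ∧ q i x ≠ 0},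
    inferInstance, Sum.elim (fun i => -PiLp.projₗ 2 _ i.1) (fun i => PiLp.projₗ 2 _ i.1), ?_⟩
  ext lam
  simp only [NTheta, mem_ofPred_eq, Sum.forall, Sum.elim_inl, Sum.elim_inr, Subtype.forall,
    LinearMap.neg_apply, PiLp.projₗ_apply, neg_nonpos]
  constructor
  · intro h
    exact ⟨fun i hi => (h i hi).1, fun i hi => ((h i hi.1).2 hi.2).le⟩
  · intro h i hi
    exact ⟨h.1 i hi, fun hq => le_antisymm (h.2 i ⟨hi, hq⟩) (h.1 i hi)⟩

theorem lamSet_nonempty {ξ : En n →L[ℝ] ℝ} (hξ : ∀ u ∈ linearizedCone n l₁ l₂ q x, ξ u ≤ 0) :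
    (LamSet n l₁ l₂ q x ξ).Nonempty := by
  classical
  -- `±eᵢ` for equalities and `eᵢ` for active inequalities; `∇q(x)*` maps them to the `±∇qᵢ(x)`
  -- that cut out the linearized cone
  let w : {i : Fin (l₁ + l₂) // (i : ℕ) < l₁ ∨ q i x = 0} ⊕ {i : Fin (l₁ + l₂) // (i : ℕ) < l₁} →
      En (l₁ + l₂) :=
    Sum.elim (fun i => EuclideanSpace.single i.1 1) (fun i => EuclideanSpace.single i.1 (-1))
  have hw (j) : w j ∈ NTheta n l₁ l₂ q x := by
    intro k hk
    rcases j with ⟨i, hi⟩ | ⟨i, hi⟩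
    · have hki : q k x ≠ 0 → k ≠ i := fun hq hki => by
        subst hki
        exact hq (hi.resolve_left (by omega))
      simp only [w, Sum.elim_inl, PiLp.single_apply]
      exact ⟨by split_ifs <;> norm_num, fun hq => if_neg (hki hq)⟩
    · have hki : k ≠ i := fun h => by
        subst h
        omega
      simp [w, hki]
  obtain ⟨μ, hμ, hξμ⟩ := exists_nonneg_sum_smul_eq_of_forall_nonpos
    (fun j => (gradSum n l₁ l₂ q x (w j) : En n →ₗ[ℝ] ℝ)) (ξ : En n →ₗ[ℝ] ℝ) fun u hu => by
      refine hξ u fun i => ⟨fun hi => ?_, fun _ hqi => ?_⟩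
      · have h₁ := hu (.inl ⟨i, .inl hi⟩)
        have h₂ := hu (.inr ⟨i, hi⟩)
        simp only [w, Sum.elim_inl, Sum.elim_inr, ContinuousLinearMap.coe_coe, gradSum_single,
          one_smul, neg_smul, neg_apply] at h₁ h₂
        linarith
      · simpa [w, gradSum_single] using hu (.inl ⟨i, .inr hqi⟩)
  obtain ⟨ι, _, f, hf⟩ := exists_nTheta_eq_setOf_forall_nonpos (q := q) x
  refine ⟨∑ j, μ j • w j, ?_, ?_⟩
  · rw [hf] at hw ⊢
    intro k
    simp only [map_sum, map_smul, smul_eq_mul]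
    exact sum_nonpos fun j _ => mul_nonpos_of_nonneg_of_nonpos (hμ j) (hw j k)
  · have hlin : gradSum n l₁ l₂ q x (∑ j, μ j • w j) = ∑ j, μ j • gradSum n l₁ l₂ q x (w j) := by
      change gradSumₗ n l₁ l₂ q x _ = ∑ j, μ j • gradSumₗ n l₁ l₂ q x (w j)
      simp only [map_sum, map_smul]
    ext u
    rw [hlin]
    simpa using (LinearMap.congr_fun hξμ u).symm

def constraintResidual (n l₁ l₂ : ℕ) (q : Fin (l₁ + l₂) → En n → ℝ) (y : En n) : ℝ :=
  (∑ i ∈ univ.filter (fun i : Fin (l₁ + l₂) => (i : ℕ) < l₁), |q i y|) +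
    ∑ i ∈ univ.filter (fun i : Fin (l₁ + l₂) => l₁ ≤ (i : ℕ)), max (q i y) 0

theorem linearizedCone_subset_tangentConeAt (hq : ∀ i, DifferentiableAt ℝ (q i) x)
    (hx : x ∈ Gam n l₁ l₂ q) {κ : ℝ}
    (hEB : ∀ᶠ y in 𝓝 x, infDist y (Gam n l₁ l₂ q) ≤ κ * constraintResidual n l₁ l₂ q y) :
    linearizedCone n l₁ l₂ q x ⊆ tangentConeAt ℝ (Gam n l₁ l₂ q) x := by
  intro u hu
  have hline : HasDerivAt (fun t : ℝ => x + t • u) u 0 := by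
    simpa using ((hasDerivAt_id (0 : ℝ)).smul_const u).const_add x
  have hφ (i) : HasDerivAt (fun t : ℝ => q i (x + t • u)) (fderiv ℝ (q i) x u) 0 := by
    have hqi : HasFDerivAt (q i) (fderiv ℝ (q i) x) (x + (0 : ℝ) • u) := by
      simpa using (hq i).hasFDerivAt
    exact hqi.comp_hasDerivAt 0 hline
  have hres : (fun t : ℝ => constraintResidual n l₁ l₂ q (x + t • u)) =o[𝓝[>] 0] fun t => t := by
    refine .add (.fun_sum fun i hi => ?_) (.fun_sum fun i hi => ?_) <;>
      replace hi := (mem_filter.1 hi).2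
    · refine isLittleO_abs_left.2 ?_
      simpa [(hx i).1 hi, (hu i).1 hi] using
        (hasDerivAt_iff_isLittleO.1 (hφ i)).mono nhdsWithin_le_nhds
    · exact isLittleO_max_zero_of_hasDerivAt (hφ i) (by simpa using (hx i).2 hi)
        fun h => (hu i).2 hi (by simpa using h)
  refine mem_tangentConeAt_of_isLittleO_infDist ⟨x, hx⟩
    (IsBigO.trans_isLittleO (IsBigO.of_bound |κ| ?_) hres)
  have hlim := hline.continuousAt.tendsto.mono_left (nhdsWithin_le_nhds (s := Ioi 0))
  rw [zero_smul, add_zero] at hlim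
  filter_upwards [hlim.eventually hEB] with t ht
  rw [Real.norm_of_nonneg infDist_nonneg, Real.norm_eq_abs, ← abs_mul]
  exact ht.trans (le_abs_self _)

theorem isMaxOn_sum_mul_of_mem_nTheta (hx : x ∈ Gam n l₁ l₂ q) {lam : En (l₁ + l₂)}
    (hlam : lam ∈ NTheta n l₁ l₂ q x) :
    IsMaxOn (fun y => ∑ i, lam i * q i y) (Gam n l₁ l₂ q) x := fun y (hy : Feas n l₁ l₂ q y) => by
  have hx0 : ∑ i, lam i * q i x = 0 := sum_eq_zero fun i _ => by
    by_cases hi : (i : ℕ) < l₁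
    · simp [(hx i).1 hi]
    · by_cases hqi : q i x = 0
      · simp [hqi]
      · simp [(hlam i (not_lt.1 hi)).2 hqi]
  show ∑ i, lam i * q i y ≤ ∑ i, lam i * q i x
  rw [hx0]
  refine sum_nonpos fun i _ => ?_
  by_cases hi : (i : ℕ) < l₁
  · simp [(hy i).1 hi]
  · exact mul_nonpos_of_nonneg_of_nonpos (hlam i (not_lt.1 hi)).1 ((hy i).2 (not_lt.1 hi))

theorem quadF_nonpos (hq : ∀ i, ContDiff ℝ 2 (q i)) {v : En n}
    (hv : v ∈ tangentConeAt ℝ (Gam n l₁ l₂ q) x) (hx : x ∈ Gam n l₁ l₂ q)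
    {lam : En (l₁ + l₂)} (hlam : lam ∈ NTheta n l₁ l₂ q x)
    (hgrad : gradSum n l₁ l₂ q x lam = 0) :
    quadF n l₁ l₂ q x v lam ≤ 0 := by
  set L : En n → ℝ := fun y => ∑ i, lam i * q i y
  have hDL : fderiv ℝ L = fun y => gradSum n l₁ l₂ q y lam := funext fun y =>
    (HasFDerivAt.fun_sum fun i _ =>
      ((hq i).differentiable two_ne_zero y).hasFDerivAt.const_mul (lam i)).fderiv
  have hD2L : fderiv ℝ (fderiv ℝ L) x = ∑ i, lam i • fderiv ℝ (fderiv ℝ (q i)) x := by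
    rw [hDL]
    exact (HasFDerivAt.fun_sum fun i _ => ((((hq i).fderiv_right (m := 1) le_rfl).differentiable
      one_ne_zero) x).hasFDerivAt.const_smul (lam i)).fderiv
  have := fderiv_fderiv_apply_nonpos_of_isMaxOn (ContDiff.sum fun i _ => contDiff_const.mul (hq i))
    hv (by rw [hDL]; exact hgrad) (isMaxOn_sum_mul_of_mem_nTheta hx hlam)
  rw [hD2L] at this
  simpa [quadF, hessQ] using this

theorem lamDir_nonempty (hq : ∀ i, ContDiff ℝ 2 (q i)) (hx : x ∈ Gam n l₁ l₂ q)
    (hlin : linearizedCone n l₁ l₂ q x ⊆ tangentConeAt ℝ (Gam n l₁ l₂ q) x)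
    {ξ : En n →L[ℝ] ℝ} (hξ : ξ ∈ NhatF n l₁ l₂ q x) {v : En n}
    (hv : v ∈ tangentConeAt ℝ (Gam n l₁ l₂ q) x) :
    (LamDir n l₁ l₂ q x ξ v).Nonempty := by
  obtain ⟨ι, _, f, hf⟩ := exists_nTheta_eq_setOf_forall_nonpos (q := q) x
  have hLam : LamSet n l₁ l₂ q x ξ = {lam | gradSumₗ n l₁ l₂ q x lam = ξ ∧ ∀ j, f j lam ≤ 0} := by
    ext lam
    rw [LamSet, mem_ofPred_eq, hf]
    exact and_comm
  obtain ⟨lam, hlam, hmax⟩ := exists_isMaxOn_of_forall_nonpos_of_eq (gradSumₗ n l₁ l₂ q x) ξ f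
    (fun _ => 0) (quadFₗ n l₁ l₂ q x v) (hLam ▸ lamSet_nonempty fun u hu => hξ u (hlin hu))
    fun μ hμ hfμ => quadF_nonpos hq hv hx (hf ▸ hfμ) hμ
  rw [← hLam] at hlam hmax
  exact ⟨lam, hlam, fun μ hμ => hmax hμ⟩

end ConstraintSystem

theorem stmt11_general (n l₁ l₂ : ℕ) (q : Fin (l₁ + l₂) → En n → ℝ) (xb : En n)
    (hq : ∀ i, ContDiff ℝ 2 (q i))
    (hmscq : MSCQ n l₁ l₂ q xb) :
    ∃ U ∈ 𝓝 xb, ∀ x ∈ U, x ∈ Gam n l₁ l₂ q →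
      ∀ ξ ∈ NhatF n l₁ l₂ q x, ∀ v ∈ Kcone n l₁ l₂ q x ξ,
        (LamDir n l₁ l₂ q x ξ v).Nonempty := by
  obtain ⟨κ, -, U, hU, hEB⟩ := hmscq
  have hEB' : ∀ᶠ y in 𝓝 xb, infDist y (Gam n l₁ l₂ q) ≤ κ * constraintResidual n l₁ l₂ q y :=
    eventually_of_mem hU hEB
  obtain ⟨V, hV, hEBnear⟩ := hEB'.eventually_nhds.exists_mem
  refine ⟨V, hV, fun x hxV hx ξ hξ v hv => lamDir_nonempty hq hx ?_ hξ hv.1⟩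
  exact linearizedCone_subset_tangentConeAt (fun i => (hq i).differentiable two_ne_zero x) hx
    (hEBnear x hxV)

/-- under MSCQ, for x near x̄, x* ∈ N̂_Γ(x) and any critical direction
v ∈ K(x,x*), the directional multiplier set Λ(x,x*;v) is nonempty. -/
theorem stmt11 (n l₁ l₂ : ℕ) (q : Fin (l₁ + l₂) → En n → ℝ) (xb : En n)
    (hq : ∀ i, ContDiff ℝ 2 (q i)) (hfeas : Feas n l₁ l₂ q xb)
    (hmscq : MSCQ n l₁ l₂ q xb) :
    ∃ U ∈ 𝓝 xb, ∀ x ∈ U, x ∈ Gam n l₁ l₂ q →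
      ∀ ξ ∈ NhatF n l₁ l₂ q x, ∀ v ∈ Kcone n l₁ l₂ q x ξ,
        (LamDir n l₁ l₂ q x ξ v).Nonempty :=
  stmt11_general n l₁ l₂ q xb hq hmscq
end
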